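/- arXiv:1605.00311 — 2 statements merged into one kernel-verified Lean document; each statement's English description precedes it below -/
import Mathlib

section
/- Assume (H1)–(H4). Then there exist constants C' > 0, ε̃ > 0, θ̂ ∈ (0,1) and real numbers (σ_j)_{j≥0} such that: (i) for every j ≥ 0 and every K ≥ 1 with j ≤ ε̃ K one has |b_{K,j} − σ_j| ≤ C' K^{2−s} (in particular σ_j = lim_{K→∞} b_{K,j}); and (ii) |σ_j| ≤ C' θ̂^j for all j ≥ 0. -/
/-!
Write `D n j K = E[ξ̂ᴷₙ ξ̂ᴷₙ₊ⱼ]`. Integrating (H4) at `l = 0` shows that `D n j K → b K j`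
geometrically in `n`. By (H1), passing from `K` to any `K' ∈ [K, 2K]` moves every `D n j ·`, hence
`b · j`, by `O(K^(2-s))`; summing over dyadic scales gives `σ j = lim b K j` with rate `K^(2-s)`.
For the decay, `ξ̂ᴷₙ` is replaced by its `𝓕ₙ₊ₖ`-measurable approximation from (H2), and (H3) at
level `n + k` with `k = j / 2` gives `|D n j K| ≲ K^(2+u) (n+j+1)^u θ^(j/2)`. Finally
`|σ j| ≤ |σ j - b K j| + |b K j - D n j K| + |D n j K|`, with `K` exponential in `j` and `n` a
large multiple of `j`, makes all three terms geometrically small.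
-/

open MeasureTheory ProbabilityTheory Filter Topology

section Probability

variable {Ω : Type*} {m0 : MeasurableSpace Ω} {μ : Measure Ω}

theorem aestronglyMeasurable_of_measure_abs_sub_ge_le {f : Ω → ℝ} {g : ℕ → Ω → ℝ} {θ c : ℝ}
    (hθ : θ ∈ Set.Ioo (0 : ℝ) 1) (hg : ∀ k, AEStronglyMeasurable (g k) μ)
    (h : ∀ k, μ {ω | θ ^ k ≤ |f ω - g k ω|} ≤ ENNReal.ofReal (c * θ ^ k)) :
    AEStronglyMeasurable f μ := by
  have hsum : ∑' k, μ {ω | θ ^ k ≤ |f ω - g k ω|} ≠ ⊤ :=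
    ne_top_of_le_ne_top
      ((summable_geometric_of_lt_one hθ.1.le hθ.2).mul_left c).tsum_ofReal_ne_top
      (ENNReal.tsum_le_tsum h)
  refine aestronglyMeasurable_of_tendsto_ae atTop hg ?_
  filter_upwards [ae_eventually_notMem hsum] with ω hω
  refine tendsto_iff_dist_tendsto_zero.2 <| squeeze_zero' (.of_forall fun _ => dist_nonneg) ?_
    (tendsto_pow_atTop_nhds_zero_of_lt_one hθ.1.le hθ.2)
  filter_upwards [hω] with k hk
  rw [Real.dist_eq, abs_sub_comm]
  exact (not_le.1 hk).le

theorem abs_integral_mul_le_mul_integral_abs {f g : Ω → ℝ} {B : ℝ} (hf : Integrable f μ)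
    (hgB : ∀ᵐ ω ∂μ, |g ω| ≤ B) : |∫ ω, f ω * g ω ∂μ| ≤ B * ∫ ω, |f ω| ∂μ := by
  rw [← integral_const_mul]
  refine abs_integral_le_integral_abs.trans <| integral_mono_of_nonneg
    (.of_forall fun _ => abs_nonneg _) (hf.abs.const_mul B) ?_
  filter_upwards [hgB] with ω hω
  rw [abs_mul, mul_comm B]
  exact mul_le_mul_of_nonneg_left hω (abs_nonneg _)

theorem integral_abs_sub_le_add {f g h : Ω → ℝ} (hf : Integrable f μ) (hg : Integrable g μ)
    (hh : Integrable h μ) :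
    ∫ ω, |f ω - g ω| ∂μ ≤ ∫ ω, |f ω - h ω| ∂μ + ∫ ω, |g ω - h ω| ∂μ := by
  have hfh : Integrable (fun ω => |f ω - h ω|) μ := (hf.sub hh).abs
  have hgh : Integrable (fun ω => |g ω - h ω|) μ := (hg.sub hh).abs
  rw [← integral_add hfh hgh]
  refine integral_mono (hf.sub hg).abs (hfh.add hgh) fun ω => ?_
  simpa only [abs_sub_comm (h ω)] using abs_sub_le (f ω) (h ω) (g ω)

theorem abs_integral_mul_sub_integral_mul_le {X X' Y Y' : Ω → ℝ} {B : ℝ}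
    (hX : Integrable X μ) (hX' : Integrable X' μ) (hY : Integrable Y μ) (hY' : Integrable Y' μ)
    (hX'B : ∀ᵐ ω ∂μ, |X' ω| ≤ B) (hYB : ∀ᵐ ω ∂μ, |Y ω| ≤ B) :
    |∫ ω, X ω * Y ω ∂μ - ∫ ω, X' ω * Y' ω ∂μ| ≤
      B * (∫ ω, |X ω - X' ω| ∂μ + ∫ ω, |Y ω - Y' ω| ∂μ) := by
  have h₁ : Integrable (fun ω => (X ω - X' ω) * Y ω) μ :=
    (hX.sub hX').mul_bdd hY.aestronglyMeasurable (by simpa using hYB)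
  have h₂ : Integrable (fun ω => (Y ω - Y' ω) * X' ω) μ :=
    (hY.sub hY').mul_bdd hX'.aestronglyMeasurable (by simpa using hX'B)
  have hsplit : ∫ ω, X ω * Y ω ∂μ - ∫ ω, X' ω * Y' ω ∂μ =
      ∫ ω, (X ω - X' ω) * Y ω ∂μ + ∫ ω, (Y ω - Y' ω) * X' ω ∂μ := by
    rw [← integral_add h₁ h₂, ← integral_sub]
    · congr 1; ext ω; ring
    · exact hX.mul_bdd hY.aestronglyMeasurable (by simpa using hYB)
    · exact hY'.bdd_mul hX'.aestronglyMeasurable (by simpa using hX'B)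
  rw [hsplit, mul_add]
  exact (abs_add_le _ _).trans (add_le_add (abs_integral_mul_le_mul_integral_abs (hX.sub hX') hYB)
    (abs_integral_mul_le_mul_integral_abs (hY.sub hY') hX'B))

variable [IsProbabilityMeasure μ]

theorem ae_abs_sub_integral_le {f g : Ω → ℝ} {B : ℝ} (hfB : ∀ᵐ ω ∂μ, |f ω| ≤ B)
    (hgB : ∀ᵐ ω ∂μ, |g ω| ≤ B) : ∀ᵐ ω ∂μ, |g ω - ∫ ω', f ω' ∂μ| ≤ 2 * B := by
  have hint : |∫ ω, f ω ∂μ| ≤ B := by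
    simpa using norm_integral_le_of_norm_le_const (μ := μ) (f := f) hfB
  filter_upwards [hgB] with ω hω
  linarith [abs_sub (g ω) (∫ ω', f ω' ∂μ)]

theorem integral_abs_centered_sub_le {f g : Ω → ℝ} (hf : Integrable f μ) (hg : Integrable g μ) :
    ∫ ω, |(f ω - ∫ ω', f ω' ∂μ) - (g ω - ∫ ω', g ω' ∂μ)| ∂μ ≤ 2 * ∫ ω, |f ω - g ω| ∂μ := by
  have hfg : Integrable (fun ω => |f ω - g ω|) μ := (hf.sub hg).abs
  calc _ ≤ ∫ ω, (|f ω - g ω| + |∫ ω', (f ω' - g ω') ∂μ|) ∂μ := by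
        refine integral_mono (((hf.sub (integrable_const _)).sub
          (hg.sub (integrable_const _))).abs) (hfg.add (integrable_const _)) fun ω => ?_
        rw [integral_sub hf hg, sub_sub_sub_comm]
        exact abs_sub _ _
    _ ≤ 2 * ∫ ω, |f ω - g ω| ∂μ := by
        rw [integral_add hfg (integrable_const _), integral_const, probReal_univ, one_smul]
        linarith [abs_integral_le_integral_abs (μ := μ) (f := fun ω => f ω - g ω)]

theorem abs_integral_le_add_mul_measureReal_compl {f : Ω → ℝ} {G : Set Ω} {a c : ℝ}
    (hf : Integrable f μ) (hG : MeasurableSet G) (ha : 0 ≤ a)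
    (hfG : ∀ᵐ ω ∂μ, ω ∈ G → |f ω| ≤ a) (hfc : ∀ᵐ ω ∂μ, |f ω| ≤ c) :
    |∫ ω, f ω ∂μ| ≤ a + c * μ.real Gᶜ := by
  rw [← integral_add_compl hG hf]
  refine (abs_add_le _ _).trans (add_le_add ?_ ?_)
  · calc |∫ ω in G, f ω ∂μ| ≤ a * μ.real G := by
          simpa only [Real.norm_eq_abs] using norm_setIntegral_le_of_norm_le_const_ae'
            (measure_lt_top μ G) (f := f) (by simpa only [Real.norm_eq_abs] using hfG)
      _ ≤ a := mul_le_of_le_one_right ha measureReal_le_one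
  · simpa only [Real.norm_eq_abs] using norm_setIntegral_le_of_norm_le_const_ae'
      (measure_lt_top μ Gᶜ) (f := f) (hfc.mono fun _ h _ => by simpa only [Real.norm_eq_abs])

theorem integral_abs_le_of_measure_abs_ge_le {f : Ω → ℝ} {B δ ε : ℝ} (hf : Integrable f μ)
    (hδ : 0 ≤ δ) (hε : 0 ≤ ε) (hfB : ∀ᵐ ω ∂μ, |f ω| ≤ B)
    (htail : μ {ω | δ ≤ |f ω|} ≤ ENNReal.ofReal ε) :
    ∫ ω, |f ω| ∂μ ≤ δ + B * ε := by
  set T := toMeasurable μ {ω | δ ≤ |f ω|}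
  have hT : μ.real T ≤ ε := by
    rw [measureReal_def, measure_toMeasurable]
    exact ENNReal.toReal_le_of_le_ofReal hε htail
  have hB : 0 ≤ B := by
    obtain ⟨ω, hω⟩ := hfB.exists
    exact (abs_nonneg _).trans hω
  have key := abs_integral_le_add_mul_measureReal_compl hf.abs
    (measurableSet_toMeasurable μ {ω | δ ≤ |f ω|}).compl hδ (a := δ) (c := B) ?_
    (by simpa using hfB)
  · rw [compl_compl, abs_of_nonneg (integral_nonneg fun _ => abs_nonneg _)] at key
    calc _ ≤ δ + B * μ.real T := key
      _ ≤ δ + B * ε := by gcongr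
  · refine .of_forall fun ω hω => ?_
    rw [abs_abs]
    exact (not_le.1 fun h => hω (subset_toMeasurable μ _ h)).le

theorem abs_integral_sub_le_of_condExp_sub_le {m : MeasurableSpace Ω} (hm : m ≤ m0)
    {Z : Ω → ℝ} {G : Set Ω} {β a B : ℝ} (hZB : ∀ᵐ ω ∂μ, |Z ω| ≤ B)
    (hG : MeasurableSet[m0] G) (ha : 0 ≤ a) (hcond : ∀ᵐ ω ∂μ, ω ∈ G → |μ[Z|m] ω - β| ≤ a) :
    |∫ ω, Z ω ∂μ - β| ≤ a + (B + |β|) * μ.real Gᶜ := by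
  have hint : ∫ ω, (μ[Z|m] ω - β) ∂μ = ∫ ω, Z ω ∂μ - β := by
    rw [integral_sub integrable_condExp (integrable_const β), integral_condExp hm,
      integral_const, probReal_univ, one_smul]
  rw [← hint]
  refine abs_integral_le_add_mul_measureReal_compl (integrable_condExp.sub (integrable_const β))
    hG ha hcond ?_
  filter_upwards [ae_bdd_abs_condExp_of_ae_bdd_abs (m := m) hZB] with ω hω
  exact (abs_sub _ _).trans (by linarith)

theorem abs_integral_mul_le_of_condExp_le {m : MeasurableSpace Ω} (hm : m ≤ m0)
    {η Y : Ω → ℝ} {G : Set Ω} {a B : ℝ} (hη : StronglyMeasurable[m] η)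
    (hηB : ∀ᵐ ω ∂μ, |η ω| ≤ B) (hY : Integrable Y μ) (hYB : ∀ᵐ ω ∂μ, |Y ω| ≤ B)
    (hG : MeasurableSet[m0] G) (ha : 0 ≤ a) (hcond : ∀ᵐ ω ∂μ, ω ∈ G → |μ[Y|m] ω| ≤ a) :
    |∫ ω, η ω * Y ω ∂μ| ≤ B * a + B ^ 2 * μ.real Gᶜ := by
  have hB : 0 ≤ B := by
    obtain ⟨ω, hω⟩ := hηB.exists
    exact (abs_nonneg _).trans hω
  have hηY : Integrable (η * Y) μ :=
    hY.bdd_mul (hη.mono hm).aestronglyMeasurable (by simpa using hηB)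
  have hpull := condExp_mul_of_stronglyMeasurable_left hη hηY hY
  have key := abs_integral_sub_le_of_condExp_sub_le (μ := μ) hm (Z := η * Y) (B := B ^ 2)
    (β := 0) ?_ hG (mul_nonneg hB ha) ?_
  · simpa using key
  · filter_upwards [hηB, hYB] with ω h1 h2
    rw [Pi.mul_apply, abs_mul, sq]
    exact mul_le_mul h1 h2 (abs_nonneg _) hB
  · filter_upwards [hpull, hηB, hcond] with ω hω h1 h2 hωG
    rw [hω, sub_zero, Pi.mul_apply, abs_mul]
    exact mul_le_mul h1 (h2 hωG) (abs_nonneg _) hB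

theorem abs_integral_mul_le_of_approx {m : MeasurableSpace Ω} (hm : m ≤ m0)
    {X η Y : Ω → ℝ} {G : Set Ω} {a B : ℝ} (hX : Integrable X μ) (hη : StronglyMeasurable[m] η)
    (hηB : ∀ᵐ ω ∂μ, |η ω| ≤ B) (hY : Integrable Y μ) (hYB : ∀ᵐ ω ∂μ, |Y ω| ≤ B)
    (hG : MeasurableSet[m0] G) (ha : 0 ≤ a) (hcond : ∀ᵐ ω ∂μ, ω ∈ G → |μ[Y|m] ω| ≤ a) :
    |∫ ω, X ω * Y ω ∂μ| ≤ B * ∫ ω, |X ω - η ω| ∂μ + (B * a + B ^ 2 * μ.real Gᶜ) := by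
  have hηi : Integrable η μ :=
    .of_bound (hη.mono hm).aestronglyMeasurable B (by simpa using hηB)
  have h₁ : Integrable (fun ω => (X ω - η ω) * Y ω) μ :=
    (hX.sub hηi).mul_bdd hY.aestronglyMeasurable (by simpa using hYB)
  have h₂ : Integrable (fun ω => η ω * Y ω) μ :=
    hY.bdd_mul hηi.aestronglyMeasurable (by simpa using hηB)
  have hsplit : ∫ ω, X ω * Y ω ∂μ = ∫ ω, (X ω - η ω) * Y ω ∂μ + ∫ ω, η ω * Y ω ∂μ := by
    rw [← integral_add h₁ h₂]
    congr 1; ext ω; ring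
  rw [hsplit]
  exact (abs_add_le _ _).trans (add_le_add (abs_integral_mul_le_mul_integral_abs (hX.sub hηi) hYB)
    (abs_integral_mul_le_of_condExp_le hm hη hηB hY hYB hG ha hcond))

end Probability

section Analysis

theorem tendsto_of_abs_sub_le_mul_pow {d : ℕ → ℝ} {β c θ : ℝ} (hθ0 : 0 ≤ θ) (hθ1 : θ < 1)
    (h : ∀ n, |d n - β| ≤ c * θ ^ n) : Tendsto d atTop (𝓝 β) := by
  have hlim := (tendsto_pow_atTop_nhds_zero_of_lt_one hθ0 hθ1).const_mul c
  rw [mul_zero] at hlim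
  exact tendsto_iff_norm_sub_tendsto_zero.2
    (squeeze_zero_norm (fun n => (norm_norm _).trans_le (h n)) hlim)

theorem tendsto_of_abs_sub_le_rpow {f : ℝ → ℝ} {L c q : ℝ} (hq : q < 0)
    (h : ∀ K, 1 ≤ K → |f K - L| ≤ c * K ^ q) : Tendsto f atTop (𝓝 L) := by
  have hlim := (tendsto_rpow_neg_atTop (neg_pos.2 hq)).const_mul c
  rw [mul_zero, neg_neg] at hlim
  exact tendsto_iff_norm_sub_tendsto_zero.2
    (squeeze_zero_norm' ((eventually_ge_atTop 1).mono fun K hK => (norm_norm _).trans_le (h K hK))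
      hlim)

theorem exists_abs_sub_le_rpow_of_dyadic {f : ℝ → ℝ} {A q : ℝ} (hq : q < 0)
    (hf : ∀ K K', 1 ≤ K → K ≤ K' → K' ≤ 2 * K → |f K - f K'| ≤ A * K ^ q) :
    ∃ L, ∀ K, 1 ≤ K → |f K - L| ≤ A * (1 + (1 - 2 ^ q)⁻¹) * K ^ q := by
  set r : ℝ := 2 ^ q
  have hr1 : r < 1 := Real.rpow_lt_one_of_one_lt_of_neg one_lt_two hq
  have hA : 0 ≤ A := by
    simpa using (abs_nonneg _).trans (hf 1 1 le_rfl le_rfl (by norm_num))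
  have hpow : ∀ m : ℕ, ((2 : ℝ) ^ m) ^ q = r ^ m := fun m =>
    (Real.rpow_pow_comm zero_le_two q m).symm
  have hstep : ∀ m : ℕ, dist (f (2 ^ m)) (f (2 ^ (m + 1))) ≤ A * r ^ m := fun m => by
    rw [Real.dist_eq, ← hpow]
    exact hf _ _ (one_le_pow₀ one_le_two) (pow_le_pow_right₀ one_le_two m.le_succ)
      (by rw [pow_succ, mul_comm])
  obtain ⟨L, hL⟩ := cauchySeq_tendsto_of_complete (cauchySeq_of_le_geometric r A hr1 hstep)
  refine ⟨L, fun K hK => ?_⟩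
  obtain ⟨m, hmK, hKm⟩ := exists_nat_pow_near hK one_lt_two
  have hnear : |f K - f (2 ^ (m + 1))| ≤ A * K ^ q :=
    hf K _ hK hKm.le (by rw [pow_succ]; linarith)
  have hlim : |f (2 ^ (m + 1)) - L| ≤ A * r ^ (m + 1) / (1 - r) := by
    simpa [Real.dist_eq] using dist_le_of_le_geometric_of_tendsto r A hr1 hstep hL (m + 1)
  have hrK : r ^ (m + 1) ≤ K ^ q := by
    rw [← hpow]
    exact Real.rpow_le_rpow_of_nonpos (by positivity) hKm.le hq.le
  have h1r : 0 < 1 - r := sub_pos.2 hr1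
  calc |f K - L| ≤ |f K - f (2 ^ (m + 1))| + |f (2 ^ (m + 1)) - L| := abs_sub_le _ _ _
    _ ≤ A * K ^ q + A * K ^ q / (1 - r) := add_le_add hnear (hlim.trans (by gcongr))
    _ = A * (1 + (1 - r)⁻¹) * K ^ q := by ring

theorem tendsto_add_one_rpow_mul_pow {q u : ℝ} (hq0 : 0 < q) (hq1 : q < 1) :
    Tendsto (fun j : ℕ => ((j : ℝ) + 1) ^ u * q ^ j) atTop (𝓝 0) := by
  have hlim := ((tendsto_rpow_mul_exp_neg_mul_atTop_nhds_zero u _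
    (neg_pos.2 (Real.log_neg hq0 hq1))).comp
    (tendsto_natCast_atTop_atTop.atTop_add (tendsto_const_nhds (x := (1 : ℝ))))).const_mul q⁻¹
  rw [mul_zero] at hlim
  refine hlim.congr fun j => ?_
  have hq : Real.exp (- -Real.log q * ((j : ℝ) + 1)) = q ^ (j + 1) := by
    rw [neg_neg, ← Real.rpow_def_of_pos hq0, ← Real.rpow_natCast]
    push_cast
    rfl
  simp only [Function.comp_apply, hq]
  field_simp
  ring

theorem exists_rpow_mul_pow_le {a q u : ℝ} (ha : 0 ≤ a) (hu : 0 ≤ u) (hq0 : 0 < q)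
    (hq1 : q < 1) : ∃ c, ∀ j : ℕ, (a * j + 1) ^ u * q ^ j ≤ c := by
  obtain ⟨c, hc⟩ := (tendsto_add_one_rpow_mul_pow (u := u) hq0 hq1).bddAbove_range
  refine ⟨(a + 1) ^ u * c, fun j => ?_⟩
  calc (a * j + 1) ^ u * q ^ j ≤ ((a + 1) * ((j : ℝ) + 1)) ^ u * q ^ j := by
        gcongr
        nlinarith [(Nat.cast_nonneg j : (0 : ℝ) ≤ j)]
    _ = (a + 1) ^ u * (((j : ℝ) + 1) ^ u * q ^ j) := by
        rw [Real.mul_rpow (by positivity) (by positivity), mul_assoc]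
    _ ≤ (a + 1) ^ u * c := by gcongr; exact hc ⟨j, rfl⟩

theorem exists_exp_mul_pow_le_pow (u : ℝ) {θ ρ : ℝ} (hθ0 : 0 ≤ θ) (hθ1 : θ < 1) (hρ : 0 < ρ) :
    ∃ M : ℕ, ∀ j : ℕ, Real.exp (u * j) * θ ^ (M * j) ≤ ρ ^ j := by
  obtain ⟨M, hM⟩ := exists_pow_lt_of_lt_one (by positivity : 0 < ρ * Real.exp (-u)) hθ1
  refine ⟨M, fun j => ?_⟩
  rw [mul_comm u, Real.exp_nat_mul, pow_mul, ← mul_pow]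
  refine pow_le_pow_left₀ (by positivity) ?_ j
  calc Real.exp u * θ ^ M ≤ Real.exp u * (ρ * Real.exp (-u)) := by gcongr
    _ = ρ := by rw [mul_left_comm, ← Real.exp_add, add_neg_cancel, Real.exp_zero, mul_one]

theorem exists_abs_le_mul_pow_of_forall_le {σ : ℕ → ℝ} {c₁ c₂ c₃ θ ρ u p r : ℝ}
    (hθ0 : 0 ≤ θ) (hθ1 : θ < 1) (hρ0 : 0 < ρ) (hρ1 : ρ < 1) (hu : 0 ≤ u) (hp : 0 < p)
    (hr : 0 < r) (hc₁ : 0 ≤ c₁) (hc₂ : 0 ≤ c₂) (hc₃ : 0 ≤ c₃)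
    (h : ∀ (j n : ℕ) (K : ℝ), 1 ≤ K → |σ j| ≤ c₁ * K ^ (-p) +
      K ^ r * (c₂ * Real.exp (u * j) * θ ^ n + c₃ * ((n : ℝ) + j + 1) ^ u * ρ ^ j)) :
    ∃ c, ∃ q ∈ Set.Ioo (0 : ℝ) 1, ∀ j, |σ j| ≤ c * q ^ j := by
  -- Take `K = κ ^ j` with `κ ^ r = ρ ^ (-1/2)` and `n = M * j`: each term decays geometrically.
  set t : ℝ := ρ ^ (1 / 4 : ℝ)
  have ht0 : 0 < t := by positivity
  have ht1 : t < 1 := Real.rpow_lt_one hρ0.le hρ1 (by norm_num)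
  set κ : ℝ := t ^ (-(2 / r))
  have hκ : 1 ≤ κ := Real.one_le_rpow_of_pos_of_le_one_of_nonpos ht0 ht1.le
    (neg_nonpos.2 (by positivity))
  have hκpow : ∀ (j : ℕ) (x : ℝ), (κ ^ j) ^ x = (t ^ (-(2 / r) * x)) ^ j := fun j x => by
    rw [← Real.rpow_pow_comm (by positivity), ← Real.rpow_mul ht0.le]
  have hκρ : ∀ j : ℕ, (κ ^ j) ^ r * ρ ^ j = t ^ j * t ^ j := fun j => by
    have hρt : ρ = t ^ 4 := by
      rw [← Real.rpow_natCast, ← Real.rpow_mul hρ0.le]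
      norm_num
    rw [hκpow, ← mul_pow, ← mul_pow, hρt,
      show -(2 / r) * r = ((-2 : ℤ) : ℝ) by push_cast; field_simp, Real.rpow_intCast]
    congr 1
    field_simp
  set q₁ : ℝ := t ^ (2 / r * p)
  have hq₁0 : 0 < q₁ := by positivity
  have hq₁1 : q₁ < 1 := Real.rpow_lt_one ht0.le ht1 (by positivity)
  obtain ⟨M, hM⟩ := exists_exp_mul_pow_le_pow u hθ0 hθ1 hρ0
  obtain ⟨c₀, hc₀⟩ := exists_rpow_mul_pow_le (a := M + 1) (by positivity) hu ht0 ht1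
  set q := max q₁ t
  have htq : ∀ j : ℕ, t ^ j ≤ q ^ j := fun j => pow_le_pow_left₀ ht0.le (le_max_right _ _) j
  refine ⟨c₁ + c₂ + c₃ * c₀, q, ⟨hq₁0.trans_le (le_max_left _ _), max_lt hq₁1 ht1⟩,
    fun j => ?_⟩
  set P := ((M * j : ℕ) + (j : ℝ) + 1) ^ u
  have hP : P * t ^ j ≤ c₀ := by
    convert hc₀ j using 3
    push_cast
    ring
  have hj := h j (M * j) (κ ^ j) (one_le_pow₀ hκ)
  rw [hκpow j (-p), neg_mul_neg] at hj
  calc |σ j| ≤ _ := hj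
    _ ≤ c₁ * q₁ ^ j + (c₂ * ((κ ^ j) ^ r * ρ ^ j) + c₃ * (P * ((κ ^ j) ^ r * ρ ^ j))) := by
        refine add_le_add le_rfl ?_
        calc (κ ^ j) ^ r * (c₂ * Real.exp (u * j) * θ ^ (M * j) + c₃ * P * ρ ^ j)
            = c₂ * ((κ ^ j) ^ r * (Real.exp (u * j) * θ ^ (M * j))) +
              c₃ * (P * ((κ ^ j) ^ r * ρ ^ j)) := by ring
          _ ≤ _ := by gcongr; exact hM j
    _ = c₁ * q₁ ^ j + c₂ * (t ^ j * t ^ j) + c₃ * (P * t ^ j * t ^ j) := by rw [hκρ]; ring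
    _ ≤ c₁ * q ^ j + c₂ * q ^ j + c₃ * (c₀ * q ^ j) := by
        have htt : t ^ j * t ^ j ≤ q ^ j :=
          (mul_le_of_le_one_left (by positivity) (pow_le_one₀ ht0.le ht1.le)).trans (htq j)
        have hPtt : P * t ^ j * t ^ j ≤ c₀ * q ^ j :=
          mul_le_mul hP (htq j) (by positivity) ((by positivity : 0 ≤ P * t ^ j).trans hP)
        have hq₁q : q₁ ^ j ≤ q ^ j := pow_le_pow_left₀ hq₁0.le (le_max_left _ _) j
        gcongr
    _ = (c₁ + c₂ + c₃ * c₀) * q ^ j := by ring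

theorem pow_div_two_add_pow_sub_div_two_le {θ : ℝ} (hθ0 : 0 < θ) (hθ1 : θ ≤ 1) (j : ℕ) :
    θ ^ (j / 2) + θ ^ (j - j / 2) ≤ 2 / √θ * √θ ^ j := by
  have hρ0 : 0 < √θ := Real.sqrt_pos.2 hθ0
  have hρ1 : √θ ≤ 1 := Real.sqrt_le_one.2 hθ1
  set ρ := √θ with hρ
  have hθρ : θ = ρ ^ 2 := by rw [hρ, Real.sq_sqrt hθ0.le]
  have h₁ : θ ^ (j / 2) ≤ ρ ^ j / ρ := by
    rw [le_div_iff₀ hρ0, hθρ, ← pow_mul, ← pow_succ]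
    exact pow_le_pow_of_le_one hρ0.le hρ1 (by omega)
  have h₂ : θ ^ (j - j / 2) ≤ ρ ^ j / ρ := by
    rw [hθρ, ← pow_mul]
    exact (pow_le_pow_of_le_one hρ0.le hρ1 (by omega)).trans
      (le_div_self (by positivity) hρ0 hρ1)
  calc _ ≤ ρ ^ j / ρ + ρ ^ j / ρ := add_le_add h₁ h₂
    _ = 2 / ρ * ρ ^ j := by ring

theorem mixing_terms_le {C u θ K : ℝ} {n j k : ℕ} (hC : 0 ≤ C) (hu : 0 ≤ u) (hθ : 0 ≤ θ)
    (hK : 1 ≤ K) (hkj : k ≤ j) :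
    2 * K * (θ ^ k + 2 * K * (C * K ^ u * ((n : ℝ) + 1) ^ u * θ ^ k)) +
        (2 * K * (C * (((n + k : ℕ) : ℝ) + 1) ^ u * K ^ u * θ ^ (j - k)) +
          (2 * K) ^ 2 * (C * θ ^ (j - k))) ≤
      6 * (C + 1) * K ^ (2 + u) * ((n : ℝ) + j + 1) ^ u * (θ ^ k + θ ^ (j - k)) := by
  set P := ((n : ℝ) + j + 1) ^ u
  have hkj' : (k : ℝ) ≤ j := by exact_mod_cast hkj
  have hP1 : 1 ≤ P := Real.one_le_rpow (by linarith [(Nat.cast_nonneg n : (0 : ℝ) ≤ n),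
    (Nat.cast_nonneg j : (0 : ℝ) ≤ j)]) hu
  have hPn : ((n : ℝ) + 1) ^ u ≤ P :=
    Real.rpow_le_rpow (by positivity) (by linarith [(Nat.cast_nonneg j : (0 : ℝ) ≤ j)]) hu
  have hPnk : (((n + k : ℕ) : ℝ) + 1) ^ u ≤ P :=
    Real.rpow_le_rpow (by positivity) (by push_cast; linarith) hu
  have hKu : 1 ≤ K ^ u := Real.one_le_rpow hK hu
  have hKK : K ≤ K ^ 2 := by nlinarith
  have hW₁ : K ^ 2 ≤ K ^ 2 * K ^ u * P := by
    calc K ^ 2 = K ^ 2 * 1 * 1 := by ring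
      _ ≤ _ := by gcongr
  have hW₂ : K ^ 2 * K ^ u * ((n : ℝ) + 1) ^ u ≤ K ^ 2 * K ^ u * P := by gcongr
  have hW₃ : K * K ^ u * (((n + k : ℕ) : ℝ) + 1) ^ u ≤ K ^ 2 * K ^ u * P := by gcongr
  set W := K ^ 2 * K ^ u * P
  have hx : 0 ≤ W * θ ^ k := by positivity
  have hy : 0 ≤ W * θ ^ (j - k) := by positivity
  calc _ = 2 * K * θ ^ k + 4 * C * (K ^ 2 * K ^ u * ((n : ℝ) + 1) ^ u) * θ ^ k +
        2 * C * (K * K ^ u * (((n + k : ℕ) : ℝ) + 1) ^ u) * θ ^ (j - k) +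
        4 * C * K ^ 2 * θ ^ (j - k) := by ring
    _ ≤ 2 * W * θ ^ k + 4 * C * W * θ ^ k + 2 * C * W * θ ^ (j - k) +
        4 * C * W * θ ^ (j - k) := by gcongr; exact hKK.trans hW₁
    _ ≤ 6 * (C + 1) * W * (θ ^ k + θ ^ (j - k)) := by nlinarith
    _ = _ := by rw [Real.rpow_add (by linarith), Real.rpow_two]; ring

theorem exists_limit_of_correlation_bounds {D : ℕ → ℕ → ℝ → ℝ} {b : ℝ → ℕ → ℝ}
    {A₁ A₂ A₃ θ u s : ℝ} (hθ0 : 0 < θ) (hθ1 : θ < 1) (hu : 0 ≤ u) (hs : 2 < s) (hA₁ : 0 ≤ A₁)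
    (hA₃ : 0 ≤ A₃)
    (hDb : ∀ K, 1 ≤ K → ∀ n j,
      |D n j K - b K j| ≤ A₁ * K ^ (2 + u) * Real.exp (u * j) * θ ^ n)
    (hDD : ∀ K K', 1 ≤ K → K ≤ K' → K' ≤ 2 * K → ∀ n j,
      |D n j K - D n j K'| ≤ A₂ * K ^ (2 - s))
    (hD : ∀ K, 1 ≤ K → ∀ n j,
      |D n j K| ≤ A₃ * K ^ (2 + u) * ((n : ℝ) + j + 1) ^ u * (θ ^ (j / 2) + θ ^ (j - j / 2))) :
    ∃ c, ∃ q ∈ Set.Ioo (0 : ℝ) 1, ∃ σ : ℕ → ℝ,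
      (∀ j K, 1 ≤ K → |b K j - σ j| ≤ c * K ^ (2 - s)) ∧ ∀ j, |σ j| ≤ c * q ^ j := by
  have hbb : ∀ j K K', 1 ≤ K → K ≤ K' → K' ≤ 2 * K → |b K j - b K' j| ≤ A₂ * K ^ (2 - s) := by
    intro j K K' hK hKK' hK'
    have hlim : ∀ K, 1 ≤ K → Tendsto (fun n => D n j K) atTop (𝓝 (b K j)) := fun K hK =>
      tendsto_of_abs_sub_le_mul_pow hθ0.le hθ1 fun n => hDb K hK n j
    exact le_of_tendsto' ((hlim K hK).sub (hlim K' (hK.trans hKK'))).abs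
      fun n => hDD K K' hK hKK' hK' n j
  have hA₂ : 0 ≤ A₂ := by
    simpa using (abs_nonneg _).trans (hbb 0 1 1 le_rfl le_rfl (by norm_num))
  choose σ hσ using fun j =>
    exists_abs_sub_le_rpow_of_dyadic (f := fun K => b K j) (by linarith) (hbb j)
  set c₁ := A₂ * (1 + (1 - (2 : ℝ) ^ (2 - s))⁻¹)
  have hc₁ : 0 ≤ c₁ := mul_nonneg hA₂ (add_nonneg zero_le_one (inv_nonneg.2 (sub_nonneg.2
    (Real.rpow_le_one_of_one_le_of_nonpos one_le_two (by linarith)))))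
  obtain ⟨c, q, hq, hσq⟩ := exists_abs_le_mul_pow_of_forall_le (σ := σ) (c₃ := A₃ * (2 / √θ))
    hθ0.le hθ1 (Real.sqrt_pos.2 hθ0) ((Real.sqrt_lt' one_pos).2 (by simpa using hθ1)) hu
    (by linarith : 0 < s - 2) (by linarith : 0 < 2 + u) hc₁ hA₁ (by positivity)
    fun j n K hK => by
      have hσb := abs_sub_abs_le_abs_sub (σ j) (b K j)
      have hbD := abs_sub_abs_le_abs_sub (b K j) (D n j K)
      rw [abs_sub_comm] at hσb hbD
      have hD' := (hD K hK n j).trans (mul_le_mul_of_nonneg_left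
        (pow_div_two_add_pow_sub_div_two_le hθ0 hθ1.le j)
        (by have := Real.rpow_nonneg (by linarith : (0 : ℝ) ≤ K) (2 + u); positivity))
      rw [neg_sub]
      linarith [hσ j K hK, hDb K hK n j]
  exact ⟨max c c₁, q, hq, σ, fun j K hK => (hσ j K hK).trans
      (mul_le_mul_of_nonneg_right (le_max_right c c₁) (Real.rpow_nonneg (by linarith) _)),
    fun j => (hσq j).trans (mul_le_mul_of_nonneg_right (le_max_left c c₁) (pow_nonneg hq.1.le j))⟩

end Analysis

section Truncations

variable {Ω : Type*} [MeasurableSpace Ω] {μ : Measure Ω} [IsProbabilityMeasure μ]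

theorem abs_integral_mul_sub_le_of_condExp_mul_sub_le {X : ℝ → ℕ → Ω → ℝ}
    {F : ℕ → MeasurableSpace Ω} {G : ℕ → ℕ → Set Ω} {b : ℝ → ℕ → ℝ} {C u θ : ℝ}
    (hC : 0 ≤ C) (hu : 0 ≤ u) (hθ0 : 0 ≤ θ) (hθ1 : θ < 1)
    (hXB : ∀ K, 1 ≤ K → ∀ n, ∀ᵐ ω ∂μ, |X K n ω| ≤ 2 * K)
    (hF : ∀ l, F l ≤ ‹MeasurableSpace Ω›) (hG : ∀ l k, MeasurableSet (G l k))
    (hGc : ∀ l k, μ (G l k)ᶜ ≤ ENNReal.ofReal (C * θ ^ k))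
    (H4 : ∀ K l k k', 1 ≤ K → k ≤ k' → ∀ᵐ ω ∂μ, ω ∈ G l k →
      |(μ[fun ω' => X K (l + k) ω' * X K (l + k') ω'|F l]) ω - b K (k' - k)| ≤
        C * ((l : ℝ) + 1) ^ u * K ^ u * Real.exp (u * ((k' : ℝ) - k)) * θ ^ k) :
    ∀ K, 1 ≤ K → ∀ n j, |∫ ω, X K n ω * X K (n + j) ω ∂μ - b K j| ≤
      9 * C * K ^ (2 + u) * Real.exp (u * j) * θ ^ n := by
  intro K hK n j
  have hK0 : 0 < K := by linarith
  have hZB : ∀ n, ∀ᵐ ω ∂μ, |X K n ω * X K (n + j) ω| ≤ (2 * K) ^ 2 := fun n => by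
    filter_upwards [hXB K hK n, hXB K hK (n + j)] with ω h₁ h₂
    rw [abs_mul, sq]
    exact mul_le_mul h₁ h₂ (abs_nonneg _) (by positivity)
  have hnear : ∀ n, |∫ ω, X K n ω * X K (n + j) ω ∂μ - b K j| ≤
      (C * K ^ u * Real.exp (u * j) + ((2 * K) ^ 2 + |b K j|) * C) * θ ^ n := fun n => by
    have hcond := H4 K 0 n (n + j) hK (Nat.le_add_right n j)
    simp only [zero_add, Nat.cast_zero, Real.one_rpow, mul_one, Nat.add_sub_cancel_left,
      Nat.cast_add, add_sub_cancel_left] at hcond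
    have hGn : μ.real (G 0 n)ᶜ ≤ C * θ ^ n :=
      ENNReal.toReal_le_of_le_ofReal (by positivity) (hGc 0 n)
    calc _ ≤ C * K ^ u * Real.exp (u * j) * θ ^ n + ((2 * K) ^ 2 + |b K j|) * μ.real (G 0 n)ᶜ :=
          abs_integral_sub_le_of_condExp_sub_le (hF 0) (hZB n) (hG 0 n) (by positivity) hcond
      _ ≤ C * K ^ u * Real.exp (u * j) * θ ^ n + ((2 * K) ^ 2 + |b K j|) * (C * θ ^ n) := by
          gcongr
      _ = _ := by ring
  have hb : |b K j| ≤ (2 * K) ^ 2 :=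
    le_of_tendsto' (tendsto_of_abs_sub_le_mul_pow hθ0 hθ1 hnear).abs fun n => by
      simpa using norm_integral_le_of_norm_le_const (μ := μ)
        (f := fun ω => X K n ω * X K (n + j) ω) (by simpa using hZB n)
  have hKu : 1 ≤ K ^ u := Real.one_le_rpow hK hu
  have hK2u : K ^ (2 + u) = K ^ 2 * K ^ u := by
    rw [Real.rpow_add hK0, Real.rpow_two]
  have he : 1 ≤ Real.exp (u * j) := Real.one_le_exp (by positivity)
  calc _ ≤ (C * K ^ u * Real.exp (u * j) + ((2 * K) ^ 2 + (2 * K) ^ 2) * C) * θ ^ n :=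
        (hnear n).trans (by gcongr)
    _ = (C * (1 * K ^ u * Real.exp (u * j)) + 8 * C * (K ^ 2 * 1 * 1)) * θ ^ n := by ring
    _ ≤ (C * (K ^ 2 * K ^ u * Real.exp (u * j)) + 8 * C * (K ^ 2 * K ^ u * Real.exp (u * j)))
        * θ ^ n := by gcongr; nlinarith
    _ = 9 * C * K ^ (2 + u) * Real.exp (u * j) * θ ^ n := by rw [hK2u]; ring

theorem abs_integral_mul_sub_integral_mul_le_of_truncation {ξ : ℕ → Ω → ℝ}
    {ξK ξhatK : ℝ → ℕ → Ω → ℝ} {C s : ℝ} (hC : 0 ≤ C) (hs : 1 ≤ s)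
    (hξ : ∀ n, Integrable (ξ n) μ) (hξK : ∀ K, 1 ≤ K → ∀ n, Integrable (ξK K n) μ)
    (hξhatK : ∀ K n ω, ξhatK K n ω = ξK K n ω - ∫ ω', ξK K n ω' ∂μ)
    (hX : ∀ K, 1 ≤ K → ∀ n, Integrable (ξhatK K n) μ)
    (hXB : ∀ K, 1 ≤ K → ∀ n, ∀ᵐ ω ∂μ, |ξhatK K n ω| ≤ 2 * K)
    (H1b1 : ∀ K, 1 ≤ K → ∀ n, ∫ ω, |ξK K n ω - ξ n ω| ∂μ ≤ C * K ^ (1 - s)) :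
    ∀ K K', 1 ≤ K → K ≤ K' → K' ≤ 2 * K → ∀ n j,
      |∫ ω, ξhatK K n ω * ξhatK K (n + j) ω ∂μ - ∫ ω, ξhatK K' n ω * ξhatK K' (n + j) ω ∂μ| ≤
        32 * C * K ^ (2 - s) := by
  intro K K' hK hKK' hK'2 n j
  have hK0 : 0 < K := by linarith
  have hK' : 1 ≤ K' := hK.trans hKK'
  have hL1 : ∀ m, ∫ ω, |ξhatK K m ω - ξhatK K' m ω| ∂μ ≤ 4 * C * K ^ (1 - s) := fun m => by
    have hpow : K' ^ (1 - s) ≤ K ^ (1 - s) :=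
      Real.rpow_le_rpow_of_nonpos hK0 hKK' (by linarith)
    simp only [hξhatK]
    calc _ ≤ 2 * ∫ ω, |ξK K m ω - ξK K' m ω| ∂μ :=
          integral_abs_centered_sub_le (hξK K hK m) (hξK K' hK' m)
      _ ≤ 2 * (C * K ^ (1 - s) + C * K' ^ (1 - s)) := by
          gcongr
          exact (integral_abs_sub_le_add (hξK K hK m) (hξK K' hK' m) (hξ m)).trans
            (add_le_add (H1b1 K hK m) (H1b1 K' hK' m))
      _ ≤ 4 * C * K ^ (1 - s) := by nlinarith
  have hB : ∀ m, ∀ᵐ ω ∂μ, |ξhatK K' m ω| ≤ 4 * K := fun m =>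
    (hXB K' hK' m).mono fun ω h => h.trans (by linarith)
  calc _ ≤ 4 * K * (∫ ω, |ξhatK K n ω - ξhatK K' n ω| ∂μ +
        ∫ ω, |ξhatK K (n + j) ω - ξhatK K' (n + j) ω| ∂μ) :=
        abs_integral_mul_sub_integral_mul_le (hX K hK n) (hX K' hK' n) (hX K hK (n + j))
          (hX K' hK' (n + j)) (hB n) ((hXB K hK (n + j)).mono fun ω h => h.trans (by linarith))
    _ ≤ 4 * K * (4 * C * K ^ (1 - s) + 4 * C * K ^ (1 - s)) := by gcongr <;> exact hL1 _
    _ = 32 * C * (K ^ (1 : ℝ) * K ^ (1 - s)) := by rw [Real.rpow_one]; ring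
    _ = 32 * C * K ^ (2 - s) := by rw [← Real.rpow_add hK0]; ring_nf

theorem abs_integral_mul_le_of_mixing {ξK ξhatK : ℝ → ℕ → Ω → ℝ} {ξapp : ℝ → ℕ → ℕ → Ω → ℝ}
    {F : ℕ → MeasurableSpace Ω} {G : ℕ → ℕ → Set Ω} {C u θ : ℝ}
    (hC : 0 ≤ C) (hu : 0 ≤ u) (hθ : 0 ≤ θ)
    (hξK : ∀ K, 1 ≤ K → ∀ n, Integrable (ξK K n) μ)
    (hξhatK : ∀ K n ω, ξhatK K n ω = ξK K n ω - ∫ ω', ξK K n ω' ∂μ)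
    (hX : ∀ K, 1 ≤ K → ∀ n, Integrable (ξhatK K n) μ)
    (hXB : ∀ K, 1 ≤ K → ∀ n, ∀ᵐ ω ∂μ, |ξhatK K n ω| ≤ 2 * K)
    (H1a : ∀ K, 1 ≤ K → ∀ n, ∀ᵐ ω ∂μ, |ξK K n ω| ≤ K)
    (hF : ∀ l, F l ≤ ‹MeasurableSpace Ω›)
    (H2meas : ∀ K l k, 1 ≤ K → Measurable[F (l + k)] (ξapp K l k))
    (H2bdd : ∀ K l k, 1 ≤ K → ∀ᵐ ω ∂μ, |ξapp K l k ω| ≤ K)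
    (H2prob : ∀ K l k, 1 ≤ K →
      μ {ω | θ ^ k ≤ |ξK K l ω - ξapp K l k ω|} ≤
        ENNReal.ofReal (C * K ^ u * ((l : ℝ) + 1) ^ u * θ ^ k))
    (hG : ∀ l k, MeasurableSet (G l k))
    (hGc : ∀ l k, μ (G l k)ᶜ ≤ ENNReal.ofReal (C * θ ^ k))
    (H3 : ∀ K l k, 1 ≤ K → ∀ᵐ ω ∂μ, ω ∈ G l k →
      |(μ[ξhatK K (l + k)|F l]) ω| ≤ C * ((l : ℝ) + 1) ^ u * K ^ u * θ ^ k) :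
    ∀ K, 1 ≤ K → ∀ n j k, k ≤ j → |∫ ω, ξhatK K n ω * ξhatK K (n + j) ω ∂μ| ≤
      6 * (C + 1) * K ^ (2 + u) * ((n : ℝ) + j + 1) ^ u * (θ ^ k + θ ^ (j - k)) := by
  intro K hK n j k hkj
  have hK0 : 0 < K := by linarith
  set η : Ω → ℝ := fun ω => ξapp K n k ω - ∫ ω', ξK K n ω' ∂μ
  have hη : StronglyMeasurable[F (n + k)] η :=
    ((H2meas K n k hK).sub measurable_const).stronglyMeasurable
  have happ : Integrable (ξapp K n k) μ :=
    .of_bound ((H2meas K n k hK).mono (hF _) le_rfl).aestronglyMeasurable K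
      (by simpa using H2bdd K n k hK)
  have hL1 : ∫ ω, |ξhatK K n ω - η ω| ∂μ ≤
      θ ^ k + 2 * K * (C * K ^ u * ((n : ℝ) + 1) ^ u * θ ^ k) := by
    have hdiff : ∀ ω, ξhatK K n ω - η ω = ξK K n ω - ξapp K n k ω := fun ω => by
      rw [hξhatK]; ring
    simp only [hdiff]
    refine integral_abs_le_of_measure_abs_ge_le ((hξK K hK n).sub happ) (by positivity)
      (by positivity) ?_ (H2prob K n k hK)
    filter_upwards [H1a K hK n, H2bdd K n k hK] with ω h₁ h₂
    linarith [abs_sub (ξK K n ω) (ξapp K n k ω)]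
  have hcond : ∀ᵐ ω ∂μ, ω ∈ G (n + k) (j - k) →
      |μ[ξhatK K (n + j)|F (n + k)] ω| ≤ C * (((n + k : ℕ) : ℝ) + 1) ^ u * K ^ u * θ ^ (j - k) := by
    have := H3 K (n + k) (j - k) hK
    rwa [show n + k + (j - k) = n + j by omega] at this
  have hGc' : μ.real (G (n + k) (j - k))ᶜ ≤ C * θ ^ (j - k) :=
    ENNReal.toReal_le_of_le_ofReal (by positivity) (hGc _ _)
  have key := abs_integral_mul_le_of_approx (hF (n + k)) (hX K hK n) hη
    (ae_abs_sub_integral_le (H1a K hK n) (H2bdd K n k hK)) (hX K hK (n + j)) (hXB K hK (n + j))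
    (hG _ _) (by positivity) hcond
  calc _ ≤ _ := key
    _ ≤ 2 * K * (θ ^ k + 2 * K * (C * K ^ u * ((n : ℝ) + 1) ^ u * θ ^ k)) +
        (2 * K * (C * (((n + k : ℕ) : ℝ) + 1) ^ u * K ^ u * θ ^ (j - k)) +
          (2 * K) ^ 2 * (C * θ ^ (j - k))) := by gcongr
    _ ≤ _ := mixing_terms_le hC hu hθ hK hkj

end Truncations

theorem b_limit_exists_general
    {Ω : Type*} [MeasurableSpace Ω] (μ : MeasureTheory.Measure Ω) [IsProbabilityMeasure μ]
    (C u θ s : ℝ) (hC : 0 < C) (hu : 0 < u) (hθ : θ ∈ Set.Ioo (0:ℝ) 1) (hs : 2 < s)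
    (ξ : ℕ → Ω → ℝ) (hξ : ∀ n, Integrable (ξ n) μ)
    (ξK : ℝ → ℕ → Ω → ℝ)
    (ξhatK : ℝ → ℕ → Ω → ℝ)
    (hξhatK : ∀ K n ω, ξhatK K n ω = ξK K n ω - ∫ ω', ξK K n ω' ∂μ)
    -- (H1)
    (H1a : ∀ K, 1 ≤ K → ∀ n, ∀ᵐ ω ∂μ, |ξK K n ω| ≤ K)
    (H1b1 : ∀ K, 1 ≤ K → ∀ n, ∫ ω, |ξK K n ω - ξ n ω| ∂μ ≤ C * K ^ (1 - s))
    -- (H2)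
    (F : ℕ → MeasurableSpace Ω) (hFle : ∀ l, F l ≤ ‹MeasurableSpace Ω›)
    (ξapp : ℝ → ℕ → ℕ → Ω → ℝ)   -- `ξapp K l k` is the variable `ξ_{l, l+k}^K`
    (H2meas : ∀ K l k, 1 ≤ K → Measurable[F (l + k)] (ξapp K l k))
    (H2bdd : ∀ K l k, 1 ≤ K → ∀ᵐ ω ∂μ, |ξapp K l k ω| ≤ K)
    (H2prob : ∀ K l k, 1 ≤ K →
      μ {ω | θ ^ k ≤ |ξK K l ω - ξapp K l k ω|} ≤
        ENNReal.ofReal (C * K ^ u * ((l : ℝ) + 1) ^ u * θ ^ k))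
    -- (H3)
    (G : ℕ → ℕ → Set Ω) (hGmeas : ∀ l k, MeasurableSet (G l k))
    (H3prob : ∀ l k, μ (G l k)ᶜ ≤ ENNReal.ofReal (C * θ ^ k))
    (H3 : ∀ K l k, 1 ≤ K → ∀ᵐ ω ∂μ, ω ∈ G l k →
      |(μ[ξhatK K (l + k)|F l]) ω| ≤ C * ((l : ℝ) + 1) ^ u * K ^ u * θ ^ k)
    -- (H4)
    (b : ℝ → ℕ → ℝ)
    (H4 : ∀ K l k k', 1 ≤ K → k ≤ k' → ∀ᵐ ω ∂μ, ω ∈ G l k →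
      |(μ[fun ω' => ξhatK K (l + k) ω' * ξhatK K (l + k') ω'|F l]) ω - b K (k' - k)| ≤
        C * ((l : ℝ) + 1) ^ u * K ^ u * Real.exp (u * ((k' : ℝ) - k)) * θ ^ k)
    :
    ∃ C' : ℝ, 0 < C' ∧ ∃ εt : ℝ, 0 < εt ∧ ∃ θh : ℝ, θh ∈ Set.Ioo (0:ℝ) 1 ∧
      ∃ σs : ℕ → ℝ,
        (∀ (j : ℕ) (K : ℝ), 1 ≤ K → (j : ℝ) ≤ εt * K →
          |b K j - σs j| ≤ C' * K ^ (2 - s)) ∧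
        (∀ j, Tendsto (fun K : ℝ => b K j) atTop (𝓝 (σs j))) ∧
        (∀ j : ℕ, |σs j| ≤ C' * θh ^ j) := by
  -- measurability of `ξK K n` is not assumed: it follows from (H2) by Borel–Cantelli
  have hξK : ∀ K, 1 ≤ K → ∀ n, Integrable (ξK K n) μ := fun K hK n =>
    .of_bound (aestronglyMeasurable_of_measure_abs_sub_ge_le hθ
      (fun k => ((H2meas K n k hK).mono (hFle _) le_rfl).aestronglyMeasurable)
      fun k => H2prob K n k hK) K (by simpa using H1a K hK n)
  have hX : ∀ K, 1 ≤ K → ∀ n, Integrable (ξhatK K n) μ := fun K hK n =>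
    ((hξK K hK n).sub (integrable_const _)).congr (.of_forall fun ω => (hξhatK K n ω).symm)
  have hXB : ∀ K, 1 ≤ K → ∀ n, ∀ᵐ ω ∂μ, |ξhatK K n ω| ≤ 2 * K := fun K hK n => by
    simpa only [hξhatK] using ae_abs_sub_integral_le (H1a K hK n) (H1a K hK n)
  obtain ⟨c, q, hq, σ, hbσ, hσ⟩ := exists_limit_of_correlation_bounds
    (D := fun n j K => ∫ ω, ξhatK K n ω * ξhatK K (n + j) ω ∂μ) hθ.1 hθ.2 hu.le hs
    (by positivity : 0 ≤ 9 * C) (by positivity : 0 ≤ 6 * (C + 1))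
    (abs_integral_mul_sub_le_of_condExp_mul_sub_le hC.le hu.le hθ.1.le hθ.2 hXB hFle hGmeas
      H3prob H4)
    (abs_integral_mul_sub_integral_mul_le_of_truncation hC.le (by linarith) hξ hξK hξhatK hX hXB
      H1b1)
    fun K hK n j => abs_integral_mul_le_of_mixing hC.le hu.le hθ.1.le hξK hξhatK hX hXB H1a hFle
      H2meas H2bdd H2prob hGmeas H3prob H3 K hK n j (j / 2) (Nat.div_le_self j 2)
  refine ⟨max c 1, lt_max_of_lt_right one_pos, 1, one_pos, q, hq, σ, fun j K hK _ => ?_,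
    fun j => tendsto_of_abs_sub_le_rpow (by linarith) (hbσ j), fun j => ?_⟩
  · exact (hbσ j K hK).trans
      (mul_le_mul_of_nonneg_right (le_max_left _ _) (Real.rpow_nonneg (by linarith) _))
  · exact (hσ j).trans (mul_le_mul_of_nonneg_right (le_max_left _ _) (pow_nonneg hq.1.le j))

/-- Under (H1)–(H4) there are `C' > 0`, `ε̃ > 0`, `θ̂ ∈ (0,1)` and reals `σ_j` such that
`|b_{K,j} − σ_j| ≤ C' K^{2−s}` whenever `j ≤ ε̃ K` (so `σ_j = lim_{K→∞} b_{K,j}`), and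
`|σ_j| ≤ C' θ̂^j` for all `j`. -/
theorem b_limit_exists
    {Ω : Type*} [MeasurableSpace Ω] (μ : MeasureTheory.Measure Ω) [IsProbabilityMeasure μ]
    (C u θ s : ℝ) (hC : 0 < C) (hu : 0 < u) (hθ : θ ∈ Set.Ioo (0:ℝ) 1) (hs : 2 < s)
    (ξ : ℕ → Ω → ℝ) (hξ : ∀ n, Integrable (ξ n) μ)
    (ξhat : ℕ → Ω → ℝ) (hξhat : ∀ n ω, ξhat n ω = ξ n ω - ∫ ω', ξ n ω' ∂μ)
    (ξK : ℝ → ℕ → Ω → ℝ)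
    (ξhatK : ℝ → ℕ → Ω → ℝ)
    (hξhatK : ∀ K n ω, ξhatK K n ω = ξK K n ω - ∫ ω', ξK K n ω' ∂μ)
    -- (H1)
    (H1a : ∀ K, 1 ≤ K → ∀ n, ∀ᵐ ω ∂μ, |ξK K n ω| ≤ K)
    (H1b1 : ∀ K, 1 ≤ K → ∀ n, ∫ ω, |ξK K n ω - ξ n ω| ∂μ ≤ C * K ^ (1 - s))
    (H1b2 : ∀ K, 1 ≤ K → ∀ n, ∫ ω, (ξK K n ω - ξ n ω) ^ 2 ∂μ ≤ C * K ^ (2 - s))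
    -- (H2)
    (F : ℕ → MeasurableSpace Ω) (hFmono : Monotone F) (hFle : ∀ l, F l ≤ ‹MeasurableSpace Ω›)
    (ξapp : ℝ → ℕ → ℕ → Ω → ℝ)   -- `ξapp K l k` is the variable `ξ_{l, l+k}^K`
    (H2meas : ∀ K l k, 1 ≤ K → Measurable[F (l + k)] (ξapp K l k))
    (H2bdd : ∀ K l k, 1 ≤ K → ∀ᵐ ω ∂μ, |ξapp K l k ω| ≤ K)
    (H2exp : ∀ K l k, 1 ≤ K → ∫ ω, ξapp K l k ω ∂μ = ∫ ω, ξK K l ω ∂μ)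
    (H2prob : ∀ K l k, 1 ≤ K →
      μ {ω | θ ^ k ≤ |ξK K l ω - ξapp K l k ω|} ≤
        ENNReal.ofReal (C * K ^ u * ((l : ℝ) + 1) ^ u * θ ^ k))
    -- (H3)
    (G : ℕ → ℕ → Set Ω) (hGmeas : ∀ l k, MeasurableSet (G l k))
    (H3prob : ∀ l k, μ (G l k)ᶜ ≤ ENNReal.ofReal (C * θ ^ k))
    (H3 : ∀ K l k, 1 ≤ K → ∀ᵐ ω ∂μ, ω ∈ G l k →
      |(μ[ξhatK K (l + k)|F l]) ω| ≤ C * ((l : ℝ) + 1) ^ u * K ^ u * θ ^ k)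
    -- (H4)
    (b : ℝ → ℕ → ℝ)
    (H4 : ∀ K l k k', 1 ≤ K → k ≤ k' → ∀ᵐ ω ∂μ, ω ∈ G l k →
      |(μ[fun ω' => ξhatK K (l + k) ω' * ξhatK K (l + k') ω'|F l]) ω - b K (k' - k)| ≤
        C * ((l : ℝ) + 1) ^ u * K ^ u * Real.exp (u * ((k' : ℝ) - k)) * θ ^ k)
    :
    ∃ C' : ℝ, 0 < C' ∧ ∃ εt : ℝ, 0 < εt ∧ ∃ θh : ℝ, θh ∈ Set.Ioo (0:ℝ) 1 ∧
      ∃ σs : ℕ → ℝ,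
        (∀ (j : ℕ) (K : ℝ), 1 ≤ K → (j : ℝ) ≤ εt * K →
          |b K j - σs j| ≤ C' * K ^ (2 - s)) ∧
        (∀ j, Tendsto (fun K : ℝ => b K j) atTop (𝓝 (σs j))) ∧
        (∀ j : ℕ, |σs j| ≤ C' * θh ^ j) :=
  b_limit_exists_general μ C u θ s hC hu hθ hs ξ hξ ξK ξhatK hξhatK H1a H1b1 F hFle ξapp H2meas
    H2bdd H2prob G hGmeas H3prob H3 b H4
end

section
/- Let 1 ≤ p ≤ q be integers and let N ≥ 1 be a real number with Np ≥ q. Then ∫_{ℝ^{d+r}} 1_{E_c(N)}(px, py) · 1_{E_c(N)}(qx, qy) dx dy = (c^r / q^{d+r}) · d · Vol(𝓑) · ln(Np/q). -/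
/-! Because `p ≤ q`, the set where both dilated indicators equal one is
`{(x, y) : |x| ∈ [1/p, N/q], 0 ≤ y_j ≤ ℓ(|x|)}` with `ℓ(s) = c / ((q s)^{d/r} q)`: the
constraint on `y` comes from the larger dilation alone. The fibre over `x` is a cube of volume
`ℓ(|x|)^r = c^r q^{-(d+r)} |x|^{-d}`. Once `|·|` is made the norm of a normed space (whose
topology is the product one, the dimension being finite), polar coordinates turn the integral of
this radial function into `c^r q^{-(d+r)} d Vol(𝓑) ∫_{1/p}^{N/q} ds / s`. -/

open MeasureTheory ProbabilityTheory Filter Topology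

open Set

noncomputable section

/-- `nrm` is a norm on `ℝ^d`. -/
def IsNorm {d : ℕ} (nrm : (Fin d → ℝ) → ℝ) : Prop :=
  (∀ x, nrm x = 0 ↔ x = 0) ∧ (∀ (t : ℝ) (x), nrm (t • x) = |t| * nrm x) ∧
    (∀ x y, nrm (x + y) ≤ nrm x + nrm y)

/-- The region `E_c(N) = {(x,y) ∈ ℝ^d × ℝ^r : |x| ∈ [1,N], |x|^{d/r} y_j ∈ [0,c] ∀j}`. -/
def Ec {d r : ℕ} (nrm : (Fin d → ℝ) → ℝ) (c N : ℝ) : Set ((Fin d → ℝ) × (Fin r → ℝ)) :=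
  {z | nrm z.1 ∈ Set.Icc 1 N ∧ ∀ j, nrm z.1 ^ ((d : ℝ) / (r : ℝ)) * z.2 j ∈ Set.Icc 0 c}

theorem indicator_one_comp_mul_indicator_one_comp {α β M : Type*} [MulZeroOneClass M]
    (E : Set β) (f g : α → β) :
    (fun z => E.indicator (fun _ => (1 : M)) (f z) * E.indicator (fun _ => (1 : M)) (g z)) =
      {z | f z ∈ E ∧ g z ∈ E}.indicator 1 := by
  ext z
  by_cases hf : f z ∈ E <;> by_cases hg : g z ∈ E <;> simp [hf, hg]

theorem div_rpow_mul_pow {d r : ℕ} (hr : r ≠ 0) {q s : ℝ} (hq : 0 ≤ q) (hs : 0 ≤ s)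
    (c : ℝ) :
    (c / ((q * s) ^ ((d : ℝ) / r) * q)) ^ r = c ^ r / q ^ (d + r) / s ^ d := by
  rw [div_pow, mul_pow, ← Real.rpow_natCast ((q * s) ^ ((d : ℝ) / r)) r,
    ← Real.rpow_mul (by positivity), div_mul_cancel₀ _ (Nat.cast_ne_zero.2 hr),
    Real.rpow_natCast, mul_pow, pow_add]
  ring

theorem setIntegral_Ioi_pow_mul_indicator_div_pow {d : ℕ} (hd : 1 ≤ d) {a b : ℝ} (ha : 0 < a)
    (hab : a ≤ b) (K : ℝ) :
    ∫ y in Ioi (0 : ℝ), y ^ (d - 1) * (Icc a b).indicator (fun y => K / y ^ d) y =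
      K * Real.log (b / a) := by
  have hsub : Icc a b ⊆ Ioi 0 := fun y hy => ha.trans_le hy.1
  have hinv : (fun y => y ^ (d - 1) * (Icc a b).indicator (fun y => K / y ^ d) y) =
      (Icc a b).indicator fun y => K * y⁻¹ := by
    ext y
    by_cases hy : y ∈ Icc a b
    · have hy0 : y ≠ 0 := (hsub hy).ne'
      rw [indicator_of_mem hy, indicator_of_mem hy, ← Nat.sub_add_cancel hd, pow_succ,
        Nat.add_sub_cancel]
      field_simp
    · simp [indicator_of_notMem hy]
  rw [hinv, setIntegral_indicator measurableSet_Icc, inter_eq_right.2 hsub,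
    integral_Icc_eq_integral_Ioc, ← intervalIntegral.integral_of_le hab,
    intervalIntegral.integral_const_mul, integral_inv_of_pos ha (ha.trans_le hab)]

-- A copy of `Fin d → ℝ` free of the sup norm, so that `nrm` can be installed as its norm.
def NormedCopy (d : ℕ) : Type := Fin d → ℝ

namespace IsNorm

variable {d : ℕ} {nrm : (Fin d → ℝ) → ℝ}

theorem nonneg (hnrm : IsNorm nrm) (x : Fin d → ℝ) : 0 ≤ nrm x := by
  have htri := hnrm.2.2 x (-x)
  have hneg : nrm (-x) = nrm x := by simpa using hnrm.2.1 (-1) x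
  rw [add_neg_cancel, (hnrm.1 0).2 rfl, hneg] at htri
  linarith

theorem exists_continuousLinearEquiv (hnrm : IsNorm nrm) :
    ∃ (E : Type) (_ : NormedAddCommGroup E) (_ : NormedSpace ℝ E) (_ : MeasurableSpace E)
      (_ : BorelSpace E) (e : (Fin d → ℝ) ≃L[ℝ] E), ∀ x, ‖e x‖ = nrm x := by
  let _ : AddCommGroup (NormedCopy d) := inferInstanceAs (AddCommGroup (Fin d → ℝ))
  let _ : Module ℝ (NormedCopy d) := inferInstanceAs (Module ℝ (Fin d → ℝ))
  let _ : Norm (NormedCopy d) := ⟨nrm⟩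
  have core : NormedSpace.Core ℝ (NormedCopy d) :=
    { norm_nonneg := hnrm.nonneg
      norm_smul := hnrm.2.1
      norm_triangle := hnrm.2.2
      norm_eq_zero_iff := hnrm.1 }
  let _ := NormedAddCommGroup.ofCore core
  let _ := NormedSpace.ofCore core
  let _ : FiniteDimensional ℝ (NormedCopy d) :=
    inferInstanceAs (FiniteDimensional ℝ (Fin d → ℝ))
  let _ : MeasurableSpace (NormedCopy d) := borel _
  let e : (Fin d → ℝ) ≃ₗ[ℝ] NormedCopy d := LinearEquiv.refl ℝ (Fin d → ℝ)
  exact ⟨NormedCopy d, _, _, _, ⟨rfl⟩, e.toContinuousLinearEquiv, fun _ => rfl⟩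

theorem continuous (hnrm : IsNorm nrm) : Continuous nrm := by
  obtain ⟨E, _, _, _, _, e, he⟩ := hnrm.exists_continuousLinearEquiv
  exact (continuous_norm.comp e.continuous).congr he

theorem integral_comp (hnrm : IsNorm nrm) (hd : 1 ≤ d) (f : ℝ → ℝ) :
    ∫ x, f (nrm x) = d * (volume {x : Fin d → ℝ | nrm x ≤ 1}).toReal *
      ∫ y in Ioi (0 : ℝ), y ^ (d - 1) * f y := by
  obtain ⟨E, _, _, _, _, e, he⟩ := hnrm.exists_continuousLinearEquiv
  have : Nonempty (Fin d) := ⟨⟨0, hd⟩⟩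
  have : Nontrivial E := e.injective.nontrivial
  have : FiniteDimensional ℝ E := e.toLinearEquiv.finiteDimensional
  have hdim : Module.finrank ℝ E = d := by
    rw [← e.toLinearEquiv.finrank_eq, Module.finrank_fin_fun]
  have hball : (volume.map e).real (Metric.ball 0 1) =
      (volume {x : Fin d → ℝ | nrm x ≤ 1}).toReal := by
    rw [← Measure.addHaar_real_closedBall_eq_addHaar_real_ball, measureReal_def,
      Measure.map_apply e.continuous.measurable Metric.isClosed_closedBall.measurableSet]
    congr 2
    ext x
    simp [he]
  calc ∫ x, f (nrm x) = ∫ w, f ‖w‖ ∂(volume.map e) := by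
        simp only [← he]
        exact (e.toHomeomorph.measurableEmbedding.integral_map (fun w => f ‖w‖)).symm
    _ = _ := by
        rw [integral_fun_norm_addHaar, hdim, hball]
        simp [smul_eq_mul, mul_assoc]

theorem setIntegral_div_pow (hnrm : IsNorm nrm) (hd : 1 ≤ d) {a b : ℝ} (ha : 0 < a)
    (hab : a ≤ b) (K : ℝ) :
    ∫ x in nrm ⁻¹' Icc a b, K / nrm x ^ d =
      K * (d * (volume {x : Fin d → ℝ | nrm x ≤ 1}).toReal * Real.log (b / a)) := by
  have hcomp : (nrm ⁻¹' Icc a b).indicator (fun x => K / nrm x ^ d) =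
      fun x => (Icc a b).indicator (fun s => K / s ^ d) (nrm x) :=
    funext fun _ => indicator_comp_right (g := fun s => K / s ^ d) nrm
  rw [← integral_indicator (hnrm.continuous.measurable measurableSet_Icc), hcomp,
    hnrm.integral_comp hd, setIntegral_Ioi_pow_mul_indicator_div_pow hd ha hab]
  ring

end IsNorm

def cubeBundle {X : Type*} (r : ℕ) (A : Set X) (ℓ : X → ℝ) : Set (X × (Fin r → ℝ)) :=
  {z | z.1 ∈ A ∧ z.2 ∈ univ.pi fun _ => Icc 0 (ℓ z.1)}

section cubeBundle

variable {X : Type*} [MeasurableSpace X] {r : ℕ} {A : Set X} {ℓ : X → ℝ}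

theorem measurableSet_cubeBundle (hA : MeasurableSet A) (hℓ : Measurable ℓ) :
    MeasurableSet (cubeBundle r A ℓ) := by
  simp only [cubeBundle, mem_univ_pi, mem_Icc, ofPred_and, ofPred_forall]
  refine (measurable_fst hA).inter (MeasurableSet.iInter fun j => .inter ?_ ?_)
  · exact measurableSet_le measurable_const ((measurable_pi_apply j).comp measurable_snd)
  · exact measurableSet_le ((measurable_pi_apply j).comp measurable_snd) (hℓ.comp measurable_fst)

theorem measureReal_cubeBundle (μ : Measure X) (hA : MeasurableSet A) (hℓ : Measurable ℓ)
    (hℓ₀ : ∀ x, 0 ≤ ℓ x) :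
    (μ.prod volume).real (cubeBundle r A ℓ) = ∫ x in A, ℓ x ^ r ∂μ := by
  have hfiber (x : X) : volume (Prod.mk x ⁻¹' cubeBundle r A ℓ) =
      A.indicator (fun x => ENNReal.ofReal (ℓ x ^ r)) x := by
    by_cases hx : x ∈ A
    · have hcube : Prod.mk x ⁻¹' cubeBundle r A ℓ = univ.pi fun _ => Icc 0 (ℓ x) := by
        ext y
        simp only [cubeBundle, mem_preimage, mem_ofPred_eq, hx, true_and]
      rw [hcube, volume_pi_pi, indicator_of_mem hx, ENNReal.ofReal_pow (hℓ₀ x)]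
      simp [Real.volume_Icc]
    · simp [cubeBundle, hx]
  rw [measureReal_def, Measure.prod_apply (measurableSet_cubeBundle hA hℓ),
    lintegral_congr hfiber, lintegral_indicator hA, integral_eq_lintegral_of_nonneg_ae]
  · exact .of_forall fun x => pow_nonneg (hℓ₀ x) r
  · exact (hℓ.pow_const r).aestronglyMeasurable

end cubeBundle

section Ec

variable {d r : ℕ} {nrm : (Fin d → ℝ) → ℝ} {c N : ℝ}

theorem smul_mem_Ec_iff (hnrm : IsNorm nrm) {t : ℝ} (ht : 0 < t)
    (z : (Fin d → ℝ) × (Fin r → ℝ)) :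
    t • z ∈ Ec nrm c N ↔ t * nrm z.1 ∈ Icc 1 N ∧
      z.2 ∈ univ.pi fun _ => Icc 0 (c / ((t * nrm z.1) ^ ((d : ℝ) / r) * t)) := by
  simp only [Ec, mem_ofPred_eq, Prod.smul_fst, Prod.smul_snd, Pi.smul_apply, smul_eq_mul,
    hnrm.2.1, abs_of_pos ht, mem_univ_pi]
  refine and_congr_right fun hs => forall_congr' fun j => ?_
  have hm : 0 < (t * nrm z.1) ^ ((d : ℝ) / r) * t := by
    have : 0 < t * nrm z.1 := zero_lt_one.trans_le hs.1
    positivity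
  have := Set.ext_iff.1 (preimage_const_mul_Icc₀ 0 c hm) (z.2 j)
  rwa [zero_div, mem_preimage, mul_assoc] at this

theorem setOf_smul_mem_Ec_and (hnrm : IsNorm nrm) (hc : 0 ≤ c) {p q : ℝ} (hp : 0 < p)
    (hpq : p ≤ q) :
    {z : (Fin d → ℝ) × (Fin r → ℝ) | p • z ∈ Ec nrm c N ∧ q • z ∈ Ec nrm c N} =
      cubeBundle r (nrm ⁻¹' Icc (1 / p) (N / q))
        fun x => c / ((q * nrm x) ^ ((d : ℝ) / r) * q) := by
  have hq := hp.trans_le hpq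
  ext ⟨x, y⟩
  simp only [mem_ofPred_eq, smul_mem_Ec_iff hnrm hp, smul_mem_Ec_iff hnrm hq, cubeBundle,
    mem_preimage, mem_Icc, div_le_iff₀ hp, le_div_iff₀ hq]
  constructor
  · rintro ⟨⟨⟨hp1, -⟩, -⟩, ⟨-, hqN⟩, hy⟩
    exact ⟨⟨by linarith, by linarith⟩, hy⟩
  · rintro ⟨⟨hp1, hqN⟩, hy⟩
    have hps : 0 < p * nrm x := by linarith
    have hpq' : p * nrm x ≤ q * nrm x := by nlinarith
    refine ⟨⟨⟨by linarith, by linarith⟩, pi_mono (fun _ _ => Icc_subset_Icc_right ?_) hy⟩,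
      ⟨by linarith, by linarith⟩, hy⟩
    have := hnrm.nonneg x
    gcongr

end Ec

theorem integral_dilated_indicators_general (d r : ℕ) (hd : 1 ≤ d) (hr : 1 ≤ r)
    (c : ℝ) (hc : 0 < c) (nrm : (Fin d → ℝ) → ℝ) (hnrm : IsNorm nrm)
    (p q : ℕ) (hp : 1 ≤ p) (hpq : p ≤ q) (N : ℝ) (hNpq : (q : ℝ) ≤ N * p) :
    ∫ z : (Fin d → ℝ) × (Fin r → ℝ),
        Set.indicator (Ec nrm c N) (fun _ => (1 : ℝ)) ((p : ℝ) • z) *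
          Set.indicator (Ec nrm c N) (fun _ => (1 : ℝ)) ((q : ℝ) • z) =
      c ^ r / (q : ℝ) ^ (d + r) *
        (d * (volume {x : Fin d → ℝ | nrm x ≤ 1}).toReal * Real.log (N * p / q)) := by
  have hp₀ : (0 : ℝ) < p := by exact_mod_cast hp
  have hpq' : (p : ℝ) ≤ q := by exact_mod_cast hpq
  have hq₀ : (0 : ℝ) < q := hp₀.trans_le hpq'
  have hab : 1 / (p : ℝ) ≤ N / q := by rw [div_le_div_iff₀ hp₀ hq₀]; linarith
  have hmeas := hnrm.continuous.measurable
  have hI : MeasurableSet (nrm ⁻¹' Icc (1 / (p : ℝ)) (N / q)) := hmeas measurableSet_Icc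
  have hℓ : Measurable fun x => c / ((q * nrm x) ^ ((d : ℝ) / r) * q) := by fun_prop
  have hℓ₀ (x : Fin d → ℝ) : 0 ≤ c / ((q * nrm x) ^ ((d : ℝ) / r) * q) := by
    have := hnrm.nonneg x
    positivity
  rw [indicator_one_comp_mul_indicator_one_comp, setOf_smul_mem_Ec_and hnrm hc.le hp₀ hpq',
    integral_indicator_one (measurableSet_cubeBundle hI hℓ), Measure.volume_eq_prod,
    measureReal_cubeBundle _ hI hℓ hℓ₀,
    setIntegral_congr_fun hI fun x _ => div_rpow_mul_pow (by omega) hq₀.le (hnrm.nonneg x) c,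
    hnrm.setIntegral_div_pow hd (by positivity) hab,
    show N / q / (1 / p) = N * p / q by field_simp]

/-- For integers `1 ≤ p ≤ q` and `N ≥ 1` with `Np ≥ q`,
`∫ 1_{E_c(N)}(px, py) 1_{E_c(N)}(qx, qy) dx dy = (c^r/q^{d+r}) d Vol(𝓑) ln(Np/q)`. -/
theorem integral_dilated_indicators (d r : ℕ) (hd : 1 ≤ d) (hr : 1 ≤ r)
    (c : ℝ) (hc : 0 < c) (nrm : (Fin d → ℝ) → ℝ) (hnrm : IsNorm nrm)
    (p q : ℕ) (hp : 1 ≤ p) (hpq : p ≤ q) (N : ℝ) (hN : 1 ≤ N) (hNpq : (q : ℝ) ≤ N * p) :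
    ∫ z : (Fin d → ℝ) × (Fin r → ℝ),
        Set.indicator (Ec nrm c N) (fun _ => (1 : ℝ)) ((p : ℝ) • z) *
          Set.indicator (Ec nrm c N) (fun _ => (1 : ℝ)) ((q : ℝ) • z) =
      c ^ r / (q : ℝ) ^ (d + r) *
        (d * (volume {x : Fin d → ℝ | nrm x ≤ 1}).toReal * Real.log (N * p / q)) :=
  integral_dilated_indicators_general d r hd hr c hc nrm hnrm p q hp hpq N hNpq

end
end
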